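/- arXiv:1708.09549 — 2 statements merged into one kernel-verified Lean document; each statement's English description precedes it below -/
import Mathlib

section
/- Let Q₀ be a cube and b locally integrable. For every x ∈ Q₀, the iterated commutator applied to (χ_{Q₀}, χ_{Q₀}) satisfies [Πb⃗, 𝓜](χ_{Q₀}, χ_{Q₀})(x) = (b(x) − M_{Q₀}(b)(x))², where b⃗ = (b,b) and M_{Q₀}(b)(x) = sup_{Q₀ ⊇ Q ∋ x} (1/|Q|)∫_Q |b|. -/
open MeasureTheory ENNReal NNReal

noncomputable section

abbrev Rn (n : ℕ) := Fin n → ℝ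

variable {n : ℕ}

/-- A cube in ℝⁿ: a closed ball in the sup norm, with center `c` and half side-length `r`. -/
def Cube (c : Rn n) (r : ℝ) : Set (Rn n) := Metric.closedBall c r

/-- Average of an `ℝ≥0∞`-valued function over a cube. -/
def cubeAvgE (g : Rn n → ℝ≥0∞) (c : Rn n) (r : ℝ) : ℝ≥0∞ :=
  (∫⁻ y in Cube c r, g y) / volume (Cube c r)

/-- Average of a real-valued function over a cube. -/
def cubeAvg (f : Rn n → ℝ) (c : Rn n) (r : ℝ) : ℝ :=
  (∫ y in Cube c r, f y) / (volume (Cube c r)).toReal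

/-- ω-measure of a cube. -/
def wVol (ω : Rn n → ℝ) (c : Rn n) (r : ℝ) : ℝ≥0∞ :=
  ∫⁻ y in Cube c r, ENNReal.ofReal (ω y)

/-- The bilinear Hardy–Littlewood maximal function 𝓜. -/
def biM (f₁ f₂ : Rn n → ℝ) (x : Rn n) : ℝ≥0∞ :=
  ⨆ (c : Rn n) (r : ℝ) (_ : 0 < r) (_ : x ∈ Cube c r),
    cubeAvgE (fun y => ENNReal.ofReal |f₁ y|) c r *
      cubeAvgE (fun y => ENNReal.ofReal |f₂ y|) c r

/-- The local maximal function M_{Q₀}, over subcubes of Q₀ = Cube c₀ r₀ containing x. -/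
def locM (c₀ : Rn n) (r₀ : ℝ) (b : Rn n → ℝ) (x : Rn n) : ℝ≥0∞ :=
  ⨆ (c : Rn n) (r : ℝ) (_ : 0 < r) (_ : x ∈ Cube c r) (_ : Cube c r ⊆ Cube c₀ r₀),
    cubeAvgE (fun y => ENNReal.ofReal |b y|) c r

/-- Maximal function of an `ℝ≥0∞`-valued function. -/
def eM (g : Rn n → ℝ≥0∞) (x : Rn n) : ℝ≥0∞ :=
  ⨆ (c : Rn n) (r : ℝ) (_ : 0 < r) (_ : x ∈ Cube c r), cubeAvgE g c r

/-- The Hardy–Littlewood maximal function M. -/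
def HLM (f : Rn n → ℝ) : Rn n → ℝ≥0∞ := eM (fun y => ENNReal.ofReal |f y|)

/-- The weighted maximal function M_{ω,s} = (M_ω(|f|^s))^{1/s}. -/
def wM (s : ℝ) (ω f : Rn n → ℝ) (x : Rn n) : ℝ≥0∞ :=
  (⨆ (c : Rn n) (r : ℝ) (_ : 0 < r) (_ : x ∈ Cube c r),
    (∫⁻ y in Cube c r, ENNReal.ofReal |f y| ^ s * ENNReal.ofReal (ω y)) / wVol ω c r) ^ (1 / s)

/-- Weighted L^p norm of an `ℝ≥0∞`-valued function. -/
def wNormE (p : ℝ) (ω : Rn n → ℝ) (g : Rn n → ℝ≥0∞) : ℝ≥0∞ :=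
  (∫⁻ x, g x ^ p * ENNReal.ofReal (ω x)) ^ (1 / p)

/-- Weighted L^p norm of a real-valued function. -/
def wNorm (p : ℝ) (ω f : Rn n → ℝ) : ℝ≥0∞ :=
  wNormE p ω fun x => ENNReal.ofReal |f x|

/-- Maximal commutator 𝓜^{(1)}_b. -/
def Mc1 (b f₁ f₂ : Rn n → ℝ) (x : Rn n) : ℝ≥0∞ :=
  ⨆ (c : Rn n) (r : ℝ) (_ : 0 < r) (_ : x ∈ Cube c r),
    (∫⁻ y₁ in Cube c r, ∫⁻ y₂ in Cube c r,
      ENNReal.ofReal |b x - b y₁| * (ENNReal.ofReal |f₁ y₁| * ENNReal.ofReal |f₂ y₂|)) /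
      volume (Cube c r) ^ 2

/-- Maximal commutator 𝓜^{(2)}_b. -/
def Mc2 (b f₁ f₂ : Rn n → ℝ) (x : Rn n) : ℝ≥0∞ :=
  ⨆ (c : Rn n) (r : ℝ) (_ : 0 < r) (_ : x ∈ Cube c r),
    (∫⁻ y₁ in Cube c r, ∫⁻ y₂ in Cube c r,
      ENNReal.ofReal |b x - b y₂| * (ENNReal.ofReal |f₁ y₁| * ENNReal.ofReal |f₂ y₂|)) /
      volume (Cube c r) ^ 2

/-- The maximal linear commutator 𝓜_{Σb⃗} for b⃗ = (b,b). -/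
def MSigma (b f₁ f₂ : Rn n → ℝ) (x : Rn n) : ℝ≥0∞ := Mc1 b f₁ f₂ x + Mc2 b f₁ f₂ x

/-- The maximal iterated commutator 𝓜_{Πb⃗} for b⃗ = (b,b). -/
def MPi (b f₁ f₂ : Rn n → ℝ) (x : Rn n) : ℝ≥0∞ :=
  ⨆ (c : Rn n) (r : ℝ) (_ : 0 < r) (_ : x ∈ Cube c r),
    (∫⁻ y₁ in Cube c r, ∫⁻ y₂ in Cube c r,
      ENNReal.ofReal |b x - b y₁| * ENNReal.ofReal |b x - b y₂| *
        (ENNReal.ofReal |f₁ y₁| * ENNReal.ofReal |f₂ y₂|)) /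
      volume (Cube c r) ^ 2

/-- The negative part b⁻ = -min{b,0}. -/
def bminus (b : Rn n → ℝ) (x : Rn n) : ℝ := max (-b x) 0

/-- The linear commutator [Σb⃗,𝓜] = [b,𝓜]^{(1)} + [b,𝓜]^{(2)}, b⃗ = (b,b). -/
def commSigma (b f₁ f₂ : Rn n → ℝ) (x : Rn n) : ℝ :=
  (b x * (biM f₁ f₂ x).toReal - (biM (fun y => b y * f₁ y) f₂ x).toReal) +
  (b x * (biM f₁ f₂ x).toReal - (biM f₁ (fun y => b y * f₂ y) x).toReal)

/-- The iterated commutator [Πb⃗,𝓜], b⃗ = (b,b). -/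
def commPi (b f₁ f₂ : Rn n → ℝ) (x : Rn n) : ℝ :=
  b x ^ 2 * (biM f₁ f₂ x).toReal - b x * (biM f₁ (fun y => b y * f₂ y) x).toReal
    - b x * (biM (fun y => b y * f₁ y) f₂ x).toReal
    + (biM (fun y => b y * f₁ y) (fun y => b y * f₂ y) x).toReal

/-- The weighted BMO^q(ω) norm. -/
def bmoNorm (q : ℝ) (ω b : Rn n → ℝ) : ℝ≥0∞ :=
  ⨆ (c : Rn n) (r : ℝ) (_ : 0 < r),
    ((∫⁻ y in Cube c r,
        ENNReal.ofReal |b y - cubeAvg b c r| ^ q * ENNReal.ofReal (ω y) ^ (1 - q)) /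
      wVol ω c r) ^ (1 / q)

/-- The Muckenhoupt class A₁. -/
def IsA1 (ω : Rn n → ℝ) : Prop :=
  Measurable ω ∧ (∀ x, 0 ≤ ω x) ∧ (∀ᵐ x ∂(volume : Measure (Rn n)), 0 < ω x) ∧
    LocallyIntegrable ω ∧
    ∃ C > (0 : ℝ), ∀ (c : Rn n) (r : ℝ), 0 < r →
      wVol ω c r / volume (Cube c r) ≤
        ENNReal.ofReal C * essInf (fun y => ENNReal.ofReal (ω y)) (volume.restrict (Cube c r))

/-- The Muckenhoupt class A_q, 1 < q < ∞. -/
def IsAq (q : ℝ) (ω : Rn n → ℝ) : Prop :=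
  Measurable ω ∧ (∀ x, 0 ≤ ω x) ∧ (∀ᵐ x ∂(volume : Measure (Rn n)), 0 < ω x) ∧
    LocallyIntegrable ω ∧
    ∃ C : ℝ, ∀ (c : Rn n) (r : ℝ), 0 < r →
      (wVol ω c r / volume (Cube c r)) *
        ((∫⁻ y in Cube c r, ENNReal.ofReal (ω y) ^ (-(1 / (q - 1)))) /
          volume (Cube c r)) ^ (q - 1) ≤ ENNReal.ofReal C

/-- A_∞ = ∪_{1 ≤ q < ∞} A_q. -/
def IsAinfty (ω : Rn n → ℝ) : Prop := IsA1 ω ∨ ∃ q > (1 : ℝ), IsAq q ω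

/-- The Fefferman–Stein sharp maximal function M^♯. -/
def sharpM (g : Rn n → ℝ) (x : Rn n) : ℝ≥0∞ :=
  ⨆ (c : Rn n) (r : ℝ) (_ : 0 < r) (_ : x ∈ Cube c r),
    (∫⁻ y in Cube c r, ENNReal.ofReal |g y - cubeAvg g c r|) / volume (Cube c r)

/-- M^♯_δ(g) = (M^♯(|g|^δ))^{1/δ}. -/
def sharpMd (δ : ℝ) (g : Rn n → ℝ) (x : Rn n) : ℝ≥0∞ :=
  sharpM (fun y => |g y| ^ δ) x ^ (1 / δ)

/-- The characteristic function of the cube Q = Cube c r. -/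
def chi (c : Rn n) (r : ℝ) : Rn n → ℝ := (Cube c r).indicator fun _ => 1

end

/-!
The averages of `χ_{Q₀}` over cubes are at most `1`, with equality on subcubes of `Q₀`, and the
average of `b χ_{Q₀}` over a subcube of `Q₀` is the average of `b`. The remaining point is that for
`x ∈ Q₀` and any cube `Q ∋ x`, shrinking `Q` to side `min ℓ(Q) ℓ(Q₀)` and sliding it into `Q₀`
gives a subcube `Q' ∋ x` of `Q₀` with `Q ∩ Q₀ ⊆ Q'` and `|Q'| ≤ |Q|`, so the average of `b χ_{Q₀}`
over `Q` is at most the average of `|b|` over `Q'`. Hence `𝓜(χ_{Q₀}, χ_{Q₀})(x) = 1`,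
`𝓜(b χ_{Q₀}, χ_{Q₀})(x) = M_{Q₀}(b)(x)` and `𝓜(b χ_{Q₀}, b χ_{Q₀})(x) = M_{Q₀}(b)(x)²`, and the
commutator expands to `(b(x) - M_{Q₀}(b)(x))²`.
-/

open Set

section Clamp

variable {a a₀ r r₀ : ℝ}

lemma abs_clamp_sub_le {s : ℝ} (hs : 0 ≤ s) : |max (a₀ - s) (min a (a₀ + s)) - a₀| ≤ s := by
  rw [abs_le]
  constructor <;> cases min_cases a (a₀ + s) <;> cases max_cases (a₀ - s) (min a (a₀ + s)) <;>
    linarith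

lemma abs_sub_clamp_le {y : ℝ} (hy : |y - a| ≤ r) (hy₀ : |y - a₀| ≤ r₀) :
    |y - max (a₀ - (r₀ - min r r₀)) (min a (a₀ + (r₀ - min r r₀)))| ≤ min r r₀ := by
  rw [abs_le] at *
  constructor <;> cases min_cases r r₀ <;> cases min_cases a (a₀ + (r₀ - min r r₀)) <;>
    cases max_cases (a₀ - (r₀ - min r r₀)) (min a (a₀ + (r₀ - min r r₀))) <;> linarith

end Clamp

section Cubes

variable {n : ℕ} {b : Rn n → ℝ} {c c₀ x : Rn n} {r r₀ : ℝ}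

lemma measurableSet_cube : MeasurableSet (Cube c r) :=
  measurableSet_closedBall

lemma volume_cube_pos (hr : 0 < r) : 0 < volume (Cube c r) := by
  rw [Cube, Real.volume_pi_closedBall c hr.le]
  exact ENNReal.ofReal_pos.2 (by positivity)

lemma volume_cube_ne_top : volume (Cube c r) ≠ ⊤ :=
  measure_closedBall_lt_top.ne

lemma volume_cube_mono {c' : Rn n} {r' : ℝ} (h₀ : 0 ≤ r') (h : r' ≤ r) :
    volume (Cube c' r') ≤ volume (Cube c r) := by
  rw [Cube, Cube, Real.volume_pi_closedBall c' h₀, Real.volume_pi_closedBall c (h₀.trans h)]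
  gcongr

lemma mem_cube_iff (hr : 0 ≤ r) {y : Rn n} : y ∈ Cube c r ↔ ∀ i, |y i - c i| ≤ r := by
  simp only [Cube, Metric.mem_closedBall, dist_pi_le_iff hr, Real.dist_eq]

lemma exists_subcube_superset_inter (hr : 0 ≤ r) (hr₀ : 0 ≤ r₀) :
    ∃ c', Cube c' (min r r₀) ⊆ Cube c₀ r₀ ∧ Cube c r ∩ Cube c₀ r₀ ⊆ Cube c' (min r r₀) := by
  have hmin : 0 ≤ min r r₀ := le_min hr hr₀
  refine ⟨fun i => max (c₀ i - (r₀ - min r r₀)) (min (c i) (c₀ i + (r₀ - min r r₀))), ?_, ?_⟩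
  · intro y hy
    rw [mem_cube_iff hmin] at hy
    rw [mem_cube_iff hr₀]
    intro i
    calc |y i - c₀ i| ≤ |y i - _| + |_ - c₀ i| := abs_sub_le _ _ _
      _ ≤ min r r₀ + (r₀ - min r r₀) :=
        add_le_add (hy i) (abs_clamp_sub_le (sub_nonneg.2 (min_le_right _ _)))
      _ = r₀ := by ring
  · rintro y ⟨hy, hy₀⟩
    rw [mem_cube_iff hr] at hy
    rw [mem_cube_iff hr₀] at hy₀
    exact (mem_cube_iff hmin).2 fun i => abs_sub_clamp_le (hy i) (hy₀ i)

lemma ofReal_abs_chi (y : Rn n) :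
    ENNReal.ofReal |chi c₀ r₀ y| = (Cube c₀ r₀).indicator 1 y := by
  by_cases hy : y ∈ Cube c₀ r₀ <;> simp [chi, hy]

lemma ofReal_abs_mul_chi (y : Rn n) :
    ENNReal.ofReal |b y * chi c₀ r₀ y| =
      (Cube c₀ r₀).indicator (fun z => ENNReal.ofReal |b z|) y := by
  by_cases hy : y ∈ Cube c₀ r₀ <;> simp [chi, hy]

lemma cubeAvgE_abs_chi :
    cubeAvgE (fun y => ENNReal.ofReal |chi c₀ r₀ y|) c r =
      volume (Cube c r ∩ Cube c₀ r₀) / volume (Cube c r) := by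
  simp only [cubeAvgE, ofReal_abs_chi]
  rw [lintegral_indicator_one measurableSet_cube, Measure.restrict_apply measurableSet_cube,
    inter_comm]

lemma cubeAvgE_abs_mul_chi :
    cubeAvgE (fun y => ENNReal.ofReal |b y * chi c₀ r₀ y|) c r =
      (∫⁻ y in Cube c r ∩ Cube c₀ r₀, ENNReal.ofReal |b y|) / volume (Cube c r) := by
  simp only [cubeAvgE, ofReal_abs_mul_chi]
  rw [lintegral_indicator measurableSet_cube, Measure.restrict_restrict measurableSet_cube,
    inter_comm]

lemma cubeAvgE_abs_chi_le_one : cubeAvgE (fun y => ENNReal.ofReal |chi c₀ r₀ y|) c r ≤ 1 := by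
  rw [cubeAvgE_abs_chi]
  exact ENNReal.div_le_of_le_mul (by simpa using measure_mono inter_subset_left)

lemma cubeAvgE_abs_chi_of_subset (hr : 0 < r) (h : Cube c r ⊆ Cube c₀ r₀) :
    cubeAvgE (fun y => ENNReal.ofReal |chi c₀ r₀ y|) c r = 1 := by
  rw [cubeAvgE_abs_chi, inter_eq_left.2 h,
    ENNReal.div_self (volume_cube_pos hr).ne' volume_cube_ne_top]

lemma cubeAvgE_abs_mul_chi_of_subset (h : Cube c r ⊆ Cube c₀ r₀) :
    cubeAvgE (fun y => ENNReal.ofReal |b y * chi c₀ r₀ y|) c r =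
      cubeAvgE (fun y => ENNReal.ofReal |b y|) c r := by
  rw [cubeAvgE_abs_mul_chi, inter_eq_left.2 h, cubeAvgE]

lemma cubeAvgE_le_locM (hr : 0 < r) (hx : x ∈ Cube c r) (h : Cube c r ⊆ Cube c₀ r₀) :
    cubeAvgE (fun y => ENNReal.ofReal |b y|) c r ≤ locM c₀ r₀ b x :=
  le_iSup₂_of_le c r <| le_iSup₂_of_le hr hx <| le_iSup_of_le h le_rfl

lemma locM_le {B : ℝ≥0∞} (h : ∀ c r, 0 < r → x ∈ Cube c r → Cube c r ⊆ Cube c₀ r₀ →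
    cubeAvgE (fun y => ENNReal.ofReal |b y|) c r ≤ B) : locM c₀ r₀ b x ≤ B :=
  iSup₂_le fun c r => iSup₂_le fun hr hx => iSup_le (h c r hr hx)

lemma cubeAvgE_abs_mul_chi_le_locM (hr₀ : 0 < r₀) (hx₀ : x ∈ Cube c₀ r₀) (hr : 0 < r)
    (hx : x ∈ Cube c r) :
    cubeAvgE (fun y => ENNReal.ofReal |b y * chi c₀ r₀ y|) c r ≤ locM c₀ r₀ b x := by
  obtain ⟨c', hsub, hinter⟩ := exists_subcube_superset_inter (c := c) hr.le hr₀.le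
  rw [cubeAvgE_abs_mul_chi]
  calc _ ≤ cubeAvgE (fun y => ENNReal.ofReal |b y|) c' (min r r₀) :=
        ENNReal.div_le_div (lintegral_mono_set hinter)
          (volume_cube_mono (le_min hr.le hr₀.le) (min_le_left _ _))
    _ ≤ locM c₀ r₀ b x := cubeAvgE_le_locM (lt_min hr hr₀) (hinter ⟨hx, hx₀⟩) hsub

end Cubes

section BilinearMaximal

variable {n : ℕ} {b f₁ f₂ : Rn n → ℝ} {c₀ x : Rn n} {r₀ : ℝ}

lemma biM_comm : biM f₁ f₂ x = biM f₂ f₁ x := by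
  simp only [biM, mul_comm]

lemma le_biM {c : Rn n} {r : ℝ} (hr : 0 < r) (hx : x ∈ Cube c r) :
    cubeAvgE (fun y => ENNReal.ofReal |f₁ y|) c r * cubeAvgE (fun y => ENNReal.ofReal |f₂ y|) c r
      ≤ biM f₁ f₂ x :=
  le_iSup₂_of_le c r <| le_iSup₂_of_le hr hx le_rfl

lemma biM_le {B : ℝ≥0∞} (h : ∀ c r, 0 < r → x ∈ Cube c r →
    cubeAvgE (fun y => ENNReal.ofReal |f₁ y|) c r *
      cubeAvgE (fun y => ENNReal.ofReal |f₂ y|) c r ≤ B) : biM f₁ f₂ x ≤ B :=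
  iSup₂_le fun c r => iSup₂_le (h c r)

lemma biM_chi_chi (hr₀ : 0 < r₀) (hx : x ∈ Cube c₀ r₀) :
    biM (chi c₀ r₀) (chi c₀ r₀) x = 1 := by
  refine le_antisymm (biM_le fun c r _ _ => ?_) ?_
  · exact mul_le_one' cubeAvgE_abs_chi_le_one cubeAvgE_abs_chi_le_one
  · have := le_biM (f₁ := chi c₀ r₀) (f₂ := chi c₀ r₀) hr₀ hx
    rwa [cubeAvgE_abs_chi_of_subset hr₀ subset_rfl, one_mul] at this

lemma biM_mul_chi_chi (hr₀ : 0 < r₀) (hx : x ∈ Cube c₀ r₀) :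
    biM (fun y => b y * chi c₀ r₀ y) (chi c₀ r₀) x = locM c₀ r₀ b x := by
  refine le_antisymm (biM_le fun c r hr hxc => ?_) (locM_le fun c r hr hxc hsub => ?_)
  · exact (mul_le_mul' (cubeAvgE_abs_mul_chi_le_locM hr₀ hx hr hxc)
      cubeAvgE_abs_chi_le_one).trans_eq (mul_one _)
  · calc _ = cubeAvgE (fun y => ENNReal.ofReal |b y * chi c₀ r₀ y|) c r *
            cubeAvgE (fun y => ENNReal.ofReal |chi c₀ r₀ y|) c r := by
          rw [cubeAvgE_abs_mul_chi_of_subset hsub, cubeAvgE_abs_chi_of_subset hr hsub, mul_one]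
      _ ≤ _ := le_biM hr hxc

lemma biM_mul_chi_mul_chi (hr₀ : 0 < r₀) (hx : x ∈ Cube c₀ r₀) :
    biM (fun y => b y * chi c₀ r₀ y) (fun y => b y * chi c₀ r₀ y) x = locM c₀ r₀ b x ^ 2 := by
  refine le_antisymm (biM_le fun c r hr hxc => ?_) ?_
  · rw [sq]
    exact mul_le_mul' (cubeAvgE_abs_mul_chi_le_locM hr₀ hx hr hxc)
      (cubeAvgE_abs_mul_chi_le_locM hr₀ hx hr hxc)
  · simp only [locM, ENNReal.iSup_pow_of_ne_zero two_ne_zero]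
    refine iSup₂_le fun c r => iSup₂_le fun hr hxc => iSup_le fun hsub => ?_
    rw [sq, ← cubeAvgE_abs_mul_chi_of_subset hsub]
    exact le_biM hr hxc

end BilinearMaximal

theorem stmt10_general {n : ℕ} (b : Rn n → ℝ)
    (c₀ : Rn n) (r₀ : ℝ) (hr₀ : 0 < r₀) (x : Rn n) (hx : x ∈ Cube c₀ r₀) :
    commPi b (chi c₀ r₀) (chi c₀ r₀) x = (b x - (locM c₀ r₀ b x).toReal) ^ 2 := by
  rw [commPi, biM_chi_chi hr₀ hx, biM_comm (f₁ := chi c₀ r₀), biM_mul_chi_chi hr₀ hx,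
    biM_mul_chi_mul_chi hr₀ hx, ENNReal.toReal_one, ENNReal.toReal_pow]
  ring

/-- [Πb⃗,𝓜](χ_{Q₀},χ_{Q₀})(x) = (b(x) - M_{Q₀}(b)(x))² for x ∈ Q₀. -/
theorem stmt10 {n : ℕ} (b : Rn n → ℝ) (hb : LocallyIntegrable b)
    (c₀ : Rn n) (r₀ : ℝ) (hr₀ : 0 < r₀) (x : Rn n) (hx : x ∈ Cube c₀ r₀) :
    commPi b (chi c₀ r₀) (chi c₀ r₀) x = (b x - (locM c₀ r₀ b x).toReal) ^ 2 :=
  stmt10_general b c₀ r₀ hr₀ x hx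
end

section
/- Let ω ∈ A₁, 1 < p₁, p₂ < ∞, 1/p = 1/p₁ + 1/p₂. Suppose the linear commutator [Σb⃗, 𝓜] with b⃗ = (b,b) is bounded from L^{p₁}(ω) × L^{p₂}(ω) to L^{p}(ω^{1-p}) with norm K. Then b⁻/ω ∈ L^∞ with ‖b⁻/ω‖_∞ ≤ C·K, where b⁻ = −min{b,0}. -/
open MeasureTheory ENNReal NNReal

/-! Test the bound on `(χ_Q, χ_Q)` for a cube `Q`. On `Q` one has `𝓜(χ_Q, χ_Q) = 1`, so
`[Σb⃗,𝓜](χ_Q, χ_Q) ≤ 2b` there and hence `b⁻ ≤ |[Σb⃗,𝓜](χ_Q, χ_Q)|`. The bound then gives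
`∫_Q (b⁻)^p ω^{1-p} ≤ K^p ω(Q)` for every cube, and Lebesgue differentiation over the cubes
centred at a point yields `(b⁻)^p ω^{1-p} ≤ K^p ω` a.e., that is `b⁻ ≤ K ω`. -/

open Metric

theorem ae_le_of_forall_setLIntegral_closedBall_le {β : Type*} [MetricSpace β] [MeasurableSpace β]
    [BorelSpace β] [SecondCountableTopology β] [HasBesicovitchCovering β]
    (μ : Measure β) [IsLocallyFiniteMeasure μ] {f g : β → ℝ≥0∞}
    (hf : AEMeasurable f μ) (hg : AEMeasurable g μ)
    (hg_fin : ∀ x r, ∫⁻ y in closedBall x r, g y ∂μ ≠ ∞)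
    (hfg : ∀ x, ∀ r > 0, ∫⁻ y in closedBall x r, f y ∂μ ≤ ∫⁻ y in closedBall x r, g y ∂μ) :
    f ≤ᵐ[μ] g := by
  have closedBall_le (x : β) (r : ℝ) (hr : 0 < r) :
      μ.withDensity f (closedBall x r) ≤ μ.withDensity g (closedBall x r) := by
    simp only [withDensity_apply _ measurableSet_closedBall]
    exact hfg x r hr
  have hg_ball (x : β) : μ.withDensity g (closedBall x 1) < ∞ := by
    rw [withDensity_apply _ measurableSet_closedBall]
    exact (hg_fin x 1).lt_top
  have : IsLocallyFiniteMeasure (μ.withDensity g) :=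
    ⟨fun x => ⟨closedBall x 1, closedBall_mem_nhds x one_pos, hg_ball x⟩⟩
  have : IsLocallyFiniteMeasure (μ.withDensity f) :=
    ⟨fun x => ⟨closedBall x 1, closedBall_mem_nhds x one_pos,
      (closedBall_le x 1 one_pos).trans_lt (hg_ball x)⟩⟩
  filter_upwards [Besicovitch.ae_tendsto_rnDeriv (μ.withDensity f) μ,
    Besicovitch.ae_tendsto_rnDeriv (μ.withDensity g) μ, Measure.rnDeriv_withDensity₀ μ hf,
    Measure.rnDeriv_withDensity₀ μ hg] with x hf_lim hg_lim hf_eq hg_eq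
  rw [← hf_eq, ← hg_eq]
  refine le_of_tendsto_of_tendsto hf_lim hg_lim ?_
  filter_upwards [self_mem_nhdsWithin] with r (hr : 0 < r)
  exact ENNReal.div_le_div_right (closedBall_le x r hr) _

section Cubes

variable {n : ℕ}

lemma abs_chi_le_one (c : Rn n) (r : ℝ) (y : Rn n) : |chi c r y| ≤ 1 := by
  by_cases hy : y ∈ Cube c r <;> simp [chi, hy]

lemma cubeAvgE_chi_le_one (c₀ : Rn n) (r₀ : ℝ) (c : Rn n) (r : ℝ) :
    cubeAvgE (fun y => ENNReal.ofReal |chi c₀ r₀ y|) c r ≤ 1 := by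
  refine ENNReal.div_le_of_le_mul ?_
  calc ∫⁻ y in Cube c r, ENNReal.ofReal |chi c₀ r₀ y|
      ≤ ∫⁻ _ in Cube c r, 1 :=
        lintegral_mono fun y => ENNReal.ofReal_le_one.mpr (abs_chi_le_one c₀ r₀ y)
    _ = 1 * volume (Cube c r) := by rw [setLIntegral_one, one_mul]

lemma cubeAvgE_chi_self {c : Rn n} {r : ℝ} (hr : 0 < r) :
    cubeAvgE (fun y => ENNReal.ofReal |chi c r y|) c r = 1 := by
  have hchi : ∫⁻ y in Cube c r, ENNReal.ofReal |chi c r y| = ∫⁻ _ in Cube c r, 1 :=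
    setLIntegral_congr_fun measurableSet_closedBall fun y hy => by simp [chi, hy]
  rw [cubeAvgE, hchi, setLIntegral_one]
  exact ENNReal.div_self (measure_closedBall_pos volume c hr).ne' measure_closedBall_lt_top.ne

lemma biM_chi_chi_s12 {c : Rn n} {r : ℝ} (hr : 0 < r) {x : Rn n} (hx : x ∈ Cube c r) :
    biM (chi c r) (chi c r) x = 1 := by
  refine le_antisymm (iSup₂_le fun c' r' => iSup₂_le fun _ _ =>
    mul_le_one' (cubeAvgE_chi_le_one c r c' r') (cubeAvgE_chi_le_one c r c' r')) ?_
  calc (1 : ℝ≥0∞) = cubeAvgE (fun y => ENNReal.ofReal |chi c r y|) c r *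
        cubeAvgE (fun y => ENNReal.ofReal |chi c r y|) c r := by
        rw [cubeAvgE_chi_self hr, one_mul]
    _ ≤ biM (chi c r) (chi c r) x := le_iSup₂_of_le c r (le_iSup₂_of_le hr hx le_rfl)

lemma bminus_le_abs_commSigma_chi (b : Rn n → ℝ) {c : Rn n} {r : ℝ} (hr : 0 < r) {x : Rn n}
    (hx : x ∈ Cube c r) : bminus b x ≤ |commSigma b (chi c r) (chi c r) x| := by
  have hA : 0 ≤ (biM (fun y => b y * chi c r y) (chi c r) x).toReal := ENNReal.toReal_nonneg
  have hB : 0 ≤ (biM (chi c r) (fun y => b y * chi c r y) x).toReal := ENNReal.toReal_nonneg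
  rw [commSigma, biM_chi_chi_s12 hr hx, ENNReal.toReal_one, mul_one, bminus]
  refine max_le ?_ (abs_nonneg _)
  rcases le_or_gt 0 (b x) with hb | hb
  · exact (neg_nonpos.mpr hb).trans (abs_nonneg _)
  · exact le_trans (by linarith) (neg_le_abs _)

end Cubes

section WeightedNorms

variable {n : ℕ}

lemma wNorm_chi {q : ℝ} (hq : 0 < q) (ω : Rn n → ℝ) (c : Rn n) (r : ℝ) :
    wNorm q ω (chi c r) = wVol ω c r ^ (1 / q) := by
  have hchi : (fun x => ENNReal.ofReal |chi c r x| ^ q * ENNReal.ofReal (ω x))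
      = (Cube c r).indicator fun x => ENNReal.ofReal (ω x) := by
    ext x
    by_cases hx : x ∈ Cube c r
    · simp [chi, hx]
    · simp [chi, hx, ENNReal.zero_rpow_of_pos hq]
  rw [wNorm, wNormE, hchi, lintegral_indicator (s := Cube c r) measurableSet_closedBall, wVol]

lemma wNormE_rpow {q : ℝ} (hq : q ≠ 0) (ω : Rn n → ℝ) (g : Rn n → ℝ≥0∞) :
    wNormE q ω g ^ q = ∫⁻ x, g x ^ q * ENNReal.ofReal (ω x) := by
  rw [wNormE, ← ENNReal.rpow_mul, one_div_mul_cancel hq, ENNReal.rpow_one]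

lemma wVol_lt_top {ω : Rn n → ℝ} (hω : LocallyIntegrable ω) (c : Rn n) (r : ℝ) :
    wVol ω c r < ∞ :=
  (hω.integrableOn_isCompact (isCompact_closedBall c r)).setLIntegral_lt_top

lemma setLIntegral_cube_bminus_rpow_le {p₁ p₂ p : ℝ} (hp₁ : 0 < p₁) (hp₂ : 0 < p₂)
    (hp : 1 / p = 1 / p₁ + 1 / p₂) {ω b : Rn n → ℝ} {K : ℝ≥0}
    (hK : ∀ f₁ f₂ : Rn n → ℝ,
      wNormE p (fun x => ω x ^ (1 - p))
          (fun x => ENNReal.ofReal |commSigma b f₁ f₂ x|) ≤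
        (K : ℝ≥0∞) * wNorm p₁ ω f₁ * wNorm p₂ ω f₂)
    (c : Rn n) {r : ℝ} (hr : 0 < r) :
    ∫⁻ x in Cube c r, ENNReal.ofReal (bminus b x) ^ p * ENNReal.ofReal (ω x ^ (1 - p))
      ≤ (K : ℝ≥0∞) ^ p * wVol ω c r := by
  have hp0 : 0 < p := one_div_pos.mp (hp ▸ by positivity)
  have hexp : 1 / p₁ * p + 1 / p₂ * p = 1 := by
    rw [← add_mul, ← hp, one_div_mul_cancel hp0.ne']
  set V := wVol ω c r
  calc ∫⁻ x in Cube c r, ENNReal.ofReal (bminus b x) ^ p * ENNReal.ofReal (ω x ^ (1 - p))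
      ≤ ∫⁻ x in Cube c r, ENNReal.ofReal |commSigma b (chi c r) (chi c r) x| ^ p *
          ENNReal.ofReal (ω x ^ (1 - p)) :=
        setLIntegral_mono' measurableSet_closedBall fun x hx => by
          gcongr
          exact bminus_le_abs_commSigma_chi b hr hx
    _ ≤ ∫⁻ x, ENNReal.ofReal |commSigma b (chi c r) (chi c r) x| ^ p *
          ENNReal.ofReal (ω x ^ (1 - p)) := setLIntegral_le_lintegral _ _
    _ = wNormE p (fun x => ω x ^ (1 - p))
          (fun x => ENNReal.ofReal |commSigma b (chi c r) (chi c r) x|) ^ p :=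
        (wNormE_rpow hp0.ne' _ _).symm
    _ ≤ ((K : ℝ≥0∞) * V ^ (1 / p₁) * V ^ (1 / p₂)) ^ p := by
        rw [← wNorm_chi hp₁, ← wNorm_chi hp₂]
        gcongr
        exact hK _ _
    _ = (K : ℝ≥0∞) ^ p * V := by
        rw [ENNReal.mul_rpow_of_nonneg _ _ hp0.le, ENNReal.mul_rpow_of_nonneg _ _ hp0.le,
          ← ENNReal.rpow_mul, ← ENNReal.rpow_mul, mul_assoc,
          ← ENNReal.rpow_add_of_nonneg _ _ (by positivity) (by positivity), hexp,
          ENNReal.rpow_one]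

end WeightedNorms

lemma le_mul_of_rpow_mul_rpow_le {m w K p : ℝ} (hm : 0 ≤ m) (hw : 0 < w) (hK : 0 ≤ K)
    (hp : 0 < p) (h : ENNReal.ofReal m ^ p * ENNReal.ofReal (w ^ (1 - p)) ≤
      ENNReal.ofReal K ^ p * ENNReal.ofReal w) : m ≤ K * w := by
  have hKw : (K * w) ^ p * w ^ (1 - p) = K ^ p * w := by
    rw [Real.mul_rpow hK hw.le, mul_assoc, ← Real.rpow_add hw, add_sub_cancel, Real.rpow_one]
  rw [ENNReal.ofReal_rpow_of_nonneg hm hp.le, ENNReal.ofReal_rpow_of_nonneg hK hp.le,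
    ← ENNReal.ofReal_mul (by positivity), ← ENNReal.ofReal_mul (by positivity),
    ENNReal.ofReal_le_ofReal_iff (by positivity), ← hKw] at h
  exact (Real.rpow_le_rpow_iff hm (by positivity) hp).mp
    (le_of_mul_le_mul_right h (Real.rpow_pos_of_pos hw _))

/-- if [Σb⃗,𝓜] is bounded L^{p₁}(ω) × L^{p₂}(ω) → L^p(ω^{1-p})
with norm K, then b⁻/ω ∈ L^∞ with ‖b⁻/ω‖_∞ ≤ C·K. -/
theorem stmt12 {n : ℕ} (p₁ p₂ p : ℝ) (hp₁ : 1 < p₁) (hp₂ : 1 < p₂)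
    (hp : 1 / p = 1 / p₁ + 1 / p₂) (ω : Rn n → ℝ) (hω : IsA1 ω)
    (b : Rn n → ℝ) (hb : LocallyIntegrable b) (K : ℝ≥0)
    (hK : ∀ f₁ f₂ : Rn n → ℝ,
      wNormE p (fun x => ω x ^ (1 - p))
          (fun x => ENNReal.ofReal |commSigma b f₁ f₂ x|) ≤
        (K : ℝ≥0∞) * wNorm p₁ ω f₁ * wNorm p₂ ω f₂) :
    ∃ C : ℝ≥0, ∀ᵐ x ∂(volume : Measure (Rn n)),
      bminus b x ≤ (C : ℝ) * (K : ℝ) * ω x := by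
  obtain ⟨hω_meas, -, hω_pos, hω_loc, -⟩ := hω
  have hp0 : 0 < p := one_div_pos.mp (hp ▸ by positivity)
  have hbminus : AEMeasurable (bminus b) :=
    hb.aestronglyMeasurable.aemeasurable.neg.max aemeasurable_const
  have hdensity : (fun x => ENNReal.ofReal (bminus b x) ^ p * ENNReal.ofReal (ω x ^ (1 - p)))
      ≤ᵐ[volume] fun x => (K : ℝ≥0∞) ^ p * ENNReal.ofReal (ω x) := by
    refine ae_le_of_forall_setLIntegral_closedBall_le volume
      ((hbminus.ennreal_ofReal.pow_const p).mul (hω_meas.pow_const _).ennreal_ofReal.aemeasurable)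
      (hω_meas.ennreal_ofReal.const_mul _).aemeasurable (fun x r => ?_) fun x r hr => ?_
    · rw [lintegral_const_mul _ hω_meas.ennreal_ofReal]
      exact ENNReal.mul_ne_top (by simp [hp0.le]) (wVol_lt_top hω_loc x r).ne
    · rw [lintegral_const_mul _ hω_meas.ennreal_ofReal]
      exact setLIntegral_cube_bminus_rpow_le (by linarith) (by linarith) hp hK x hr
  refine ⟨1, ?_⟩
  filter_upwards [hdensity, hω_pos] with x hx hωx
  rw [NNReal.coe_one, one_mul]
  rw [← ENNReal.ofReal_coe_nnreal] at hx
  exact le_mul_of_rpow_mul_rpow_le (le_max_right _ _) hωx K.coe_nonneg hp0 hx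
end
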